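/- Let A be a locally finite hyperplane arrangement in ℝⁿ and fix a chamber C. The map η̃_C sending a Salvetti cell ⟨D,F⟩ ∈ S(C) to the chamber D^F opposite to D with respect to F is order-preserving from S(C) (with the order induced from the Salvetti poset) to the tope poset (C(A), ≤_C), where D' ≤_C D iff s(C,D') ⊆ s(C,D). -/

import Mathlib

open Metric Set MeasureTheory

noncomputable section

/-- A locally finite arrangement of affine hyperplanes in ℝⁿ, given by affine
equations `⟪a i, x⟫ = b i` with `a i ≠ 0`, indexed injectively by `ι`. -/
structure Arrangement (n : ℕ) (ι : Type) where
  a : ι → EuclideanSpace ℝ (Fin n)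
  b : ι → ℝ
  ha : ∀ i, a i ≠ 0
  inj : Function.Injective fun i => {x : EuclideanSpace ℝ (Fin n) | (inner ℝ (a i) x : ℝ) = b i}
  locFin : ∀ x : EuclideanSpace ℝ (Fin n), ∃ ε > 0,
    {i : ι | ∃ y ∈ Metric.ball x ε, (inner ℝ (a i) y : ℝ) = b i}.Finite

namespace Arrangement

variable {n : ℕ} {ι : Type} (A : Arrangement n ι)

/-- The defining affine functional of the `i`-th hyperplane. -/
def val (i : ι) (x : EuclideanSpace ℝ (Fin n)) : ℝ := (inner ℝ (A.a i) x : ℝ) - A.b i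

/-- The `i`-th hyperplane. -/
def hyperplane (i : ι) : Set (EuclideanSpace ℝ (Fin n)) := {x | A.val i x = 0}

/-- The sign vector of a point. -/
def signAt (x : EuclideanSpace ℝ (Fin n)) : ι → SignType := fun i => SignType.sign (A.val i x)

/-- The (relatively open) stratum with sign vector `σ`. -/
def openCell (σ : ι → SignType) : Set (EuclideanSpace ℝ (Fin n)) :=
  {x | ∀ i, SignType.sign (A.val i x) = σ i}

/-- The (closed) faces of the arrangement: closures of the strata. -/
def IsFace (F : Set (EuclideanSpace ℝ (Fin n))) : Prop :=
  ∃ x : EuclideanSpace ℝ (Fin n), F = closure (A.openCell (A.signAt x))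

/-- Chambers: closed faces of codimension 0. -/
def IsChamber (C : Set (EuclideanSpace ℝ (Fin n))) : Prop :=
  ∃ x : EuclideanSpace ℝ (Fin n), (∀ i, A.val i x ≠ 0) ∧
    C = closure (A.openCell (A.signAt x))

/-- The support of a subset: the hyperplanes containing it. -/
def supp (U : Set (EuclideanSpace ℝ (Fin n))) : Set ι := {i | U ⊆ A.hyperplane i}

/-- The set of hyperplanes separating two chambers. -/
def sep (C C' : Set (EuclideanSpace ℝ (Fin n))) : Set ι :=
  {i | ∀ x ∈ interior C, ∀ y ∈ interior C', A.val i x * A.val i y < 0}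

/-- `F` is a face of the chamber (or face) `C`. -/
def IsFaceOf (F C : Set (EuclideanSpace ℝ (Fin n))) : Prop := A.IsFace F ∧ F ⊆ C

/-- `A.IsCF C F D` means `D = C.F`: `D` is the unique chamber containing `F` and not
separated from `C` by any hyperplane of `supp F`. -/
def IsCF (C F D : Set (EuclideanSpace ℝ (Fin n))) : Prop :=
  A.IsChamber D ∧ F ⊆ D ∧ A.sep C D ∩ A.supp F = ∅

/-- `A.IsOpp D F E` means `E = D^F`: `E` is the chamber opposite to `D` with respect to
its face `F`, i.e. the hyperplanes separating `D` and `E` are exactly those containing `F`. -/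
def IsOpp (D F E : Set (EuclideanSpace ℝ (Fin n))) : Prop :=
  A.IsChamber E ∧ F ⊆ E ∧ A.sep D E = A.supp F

/-- Flats: nonempty intersections of subfamilies of hyperplanes (including ℝⁿ itself). -/
def IsFlat (X : Set (EuclideanSpace ℝ (Fin n))) : Prop :=
  X.Nonempty ∧ ∃ s : Set ι, X = ⋂ i ∈ s, A.hyperplane i

/-- A cell `⟨C, F⟩` of the Salvetti complex: a chamber `C` together with a face `F` of `C`. -/
structure Cell {n : ℕ} {ι : Type} (𝒜 : Arrangement n ι) where
  C : Set (EuclideanSpace ℝ (Fin n))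
  F : Set (EuclideanSpace ℝ (Fin n))
  isChamber : 𝒜.IsChamber C
  isFace : 𝒜.IsFace F
  faceLe : F ⊆ C

/-- The Salvetti order: `⟨C,F⟩ ≤ ⟨D,G⟩` iff `F ⪯ G` (i.e. `F ⊇ G`) and `D.F = C`. -/
def cellLE (c d : A.Cell) : Prop := d.F ⊆ c.F ∧ A.IsCF d.C c.F c.C

/-- The subcomplex `S(C)`: cells `⟨D,F⟩` with `D = C.F`. -/
def inS (C : Set (EuclideanSpace ℝ (Fin n))) (c : A.Cell) : Prop := A.IsCF C c.F c.C

/-- A strict total order on the chambers. -/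
def IsChamberOrder (lt : Set (EuclideanSpace ℝ (Fin n)) → Set (EuclideanSpace ℝ (Fin n)) → Prop) :
    Prop :=
  (∀ C C', A.IsChamber C → A.IsChamber C' → C ≠ C' → lt C C' ∨ lt C' C) ∧
  (∀ C, ¬ lt C C) ∧
  (∀ C C' C'', lt C C' → lt C' C'' → lt C C'')

/-- The upper ideal `J(C)` of the poset of flats determined by a total order on chambers. -/
def J (lt : Set (EuclideanSpace ℝ (Fin n)) → Set (EuclideanSpace ℝ (Fin n)) → Prop)
    (C : Set (EuclideanSpace ℝ (Fin n))) : Set (Set (EuclideanSpace ℝ (Fin n))) :=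
  {X | A.IsFlat X ∧ ∀ C', A.IsChamber C' → lt C' C → (A.supp X ∩ A.sep C C').Nonempty}

/-- A valid order: for each chamber `C`, the ideal `J(C)` is the principal upper ideal
(in the poset of flats ordered by reverse inclusion) generated by `X_C = |F_C|` for some
face `F_C` of `C`. -/
def IsValidOrder
    (lt : Set (EuclideanSpace ℝ (Fin n)) → Set (EuclideanSpace ℝ (Fin n)) → Prop) : Prop :=
  A.IsChamberOrder lt ∧
  ∀ C, A.IsChamber C → ∃ F_C, A.IsFaceOf F_C C ∧
    A.J lt C = {X | A.IsFlat X ∧ X ⊆ (affineSpan ℝ F_C : Set (EuclideanSpace ℝ (Fin n)))}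

/-- Membership in `N(C)`: cells of `S(C)` not lying in any earlier `S(C')`. -/
def inN (lt : Set (EuclideanSpace ℝ (Fin n)) → Set (EuclideanSpace ℝ (Fin n)) → Prop)
    (C : Set (EuclideanSpace ℝ (Fin n))) (c : A.Cell) : Prop :=
  A.inS C c ∧ ∀ C', A.IsChamber C' → lt C' C → ¬ A.inS C' c

/-- A point `x₀` is generic with respect to `A`: (i) chambers at equal distance from `x₀`
have the same metric projection of `x₀`, lying in their intersection; (ii) distances to
strictly comparable flats are strictly comparable. -/
def IsGeneric (x₀ : EuclideanSpace ℝ (Fin n)) : Prop :=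
  (∀ C C', A.IsChamber C → A.IsChamber C' → infDist x₀ C = infDist x₀ C' →
    ∀ p ∈ C, ∀ p' ∈ C', (∀ q ∈ C, dist x₀ p ≤ dist x₀ q) →
      (∀ q ∈ C', dist x₀ p' ≤ dist x₀ q) → p = p' ∧ p ∈ C ∩ C') ∧
  (∀ L L', A.IsFlat L → A.IsFlat L' → L' ⊂ L → infDist x₀ L < infDist x₀ L')

end Arrangement

/-!
Inside a chamber the defining functionals have constant nonzero signs, so for chambers
`s(C,E) = s(C,D) ∆ s(D,E)`. Let `H` separate `C` from `E' = D'^{F'}`. If `H ⊇ F`, then `H` does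
not separate `C` from `D = C.F` but separates `D` from `E = D^F`, hence separates `C` from `E`.
Otherwise `H ⊉ F'` (as `F ⊆ F'`), so `H` does not separate `D'` from `E'`, and thus
separates `C` from `D'`; a point of `F` off `H` lies in both `D'` and `E`, so `H` does not
separate `D'` from `E` either, and again `H` separates `C` from `E`.
-/

open Filter Topology
open scoped symmDiff

theorem mul_neg_iff_sign_ne {α : Type*} [Ring α] [LinearOrder α] [IsStrictOrderedRing α]
    {a b : α} (ha : a ≠ 0) (hb : b ≠ 0) :
    a * b < 0 ↔ SignType.sign a ≠ SignType.sign b := by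
  rw [← sign_eq_neg_one_iff, sign_mul]
  have hsa := sign_ne_zero.2 ha
  have hsb := sign_ne_zero.2 hb
  generalize SignType.sign a = s at *
  generalize SignType.sign b = t at *
  revert s t
  decide

namespace Arrangement

variable {n : ℕ} {ι : Type} (A : Arrangement n ι)

theorem continuous_val (i : ι) : Continuous (A.val i) :=
  (continuous_const.inner continuous_id).sub continuous_const

theorem convex_openCell (σ : ι → SignType) : Convex ℝ (A.openCell σ) := by
  have hcell : A.openCell σ =
      ⋂ i, innerSL ℝ (A.a i) ⁻¹' ((fun t => SignType.sign (t - A.b i)) ⁻¹' {σ i}) := by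
    ext x; simp [openCell, val]
  rw [hcell]
  exact convex_iInter fun i =>
    ((ordConnected_singleton.preimage_mono fun s t hst =>
      SignType.sign.monotone (sub_le_sub_right hst _)).convex).linear_preimage _

variable {A} in
theorem sign_val_eq_of_isPreconnected {i : ι} {s : Set (EuclideanSpace ℝ (Fin n))}
    (hs : IsPreconnected s) (hne : ∀ z ∈ s, A.val i z ≠ 0) {x y : EuclideanSpace ℝ (Fin n)}
    (hx : x ∈ s) (hy : y ∈ s) : SignType.sign (A.val i x) = SignType.sign (A.val i y) := by
  by_contra hxy
  have h0 : (0 : ℝ) ∈ uIcc (A.val i x) (A.val i y) := by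
    rcases mul_neg_iff.1 ((mul_neg_iff_sign_ne (hne x hx) (hne y hy)).2 hxy) with h | h
    · exact mem_uIcc.2 (Or.inr ⟨h.2.le, h.1.le⟩)
    · exact mem_uIcc.2 (Or.inl ⟨h.1.le, h.2.le⟩)
  obtain ⟨z, hz, hz0⟩ := (hs.image _ (A.continuous_val i).continuousOn).ordConnected.uIcc_subset
    (mem_image_of_mem _ hx) (mem_image_of_mem _ hy) h0
  exact hne z hz hz0

theorem exists_ball_forall_val_ne_zero {p : EuclideanSpace ℝ (Fin n)}
    (hp : ∀ i, A.val i p ≠ 0) :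
    ∃ r > 0, ∀ i, ∀ y ∈ ball p r, A.val i y ≠ 0 := by
  obtain ⟨ε, hε, hfin⟩ := A.locFin p
  set near := {i : ι | ∃ y ∈ ball p ε, (inner ℝ (A.a i) y : ℝ) = A.b i}
  have hU : ball p ε ∩ ⋂ i ∈ near, {y | A.val i y ≠ 0} ∈ 𝓝 p :=
    inter_mem (Metric.ball_mem_nhds p hε) <| (biInter_mem hfin).2 fun i _ =>
      (isOpen_ne_fun (A.continuous_val i) continuous_const).mem_nhds (hp i)
  obtain ⟨r, hr, hball⟩ := Metric.mem_nhds_iff.1 hU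
  refine ⟨r, hr, fun i y hy hy0 => ?_⟩
  obtain ⟨hyε, hynear⟩ := hball hy
  by_cases hi : i ∈ near
  · exact mem_iInter₂.1 hynear i hi hy0
  · exact hi ⟨y, hyε, sub_eq_zero.1 hy0⟩

theorem isOpen_openCell {σ : ι → SignType} (hσ : ∀ i, σ i ≠ 0) : IsOpen (A.openCell σ) := by
  refine Metric.isOpen_iff.2 fun p hp => ?_
  have hp0 : ∀ i, A.val i p ≠ 0 := fun i => sign_ne_zero.1 ((hp i).symm ▸ hσ i)
  obtain ⟨r, hr, hne⟩ := A.exists_ball_forall_val_ne_zero hp0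
  exact ⟨r, hr, fun y hy i => (hp i) ▸ sign_val_eq_of_isPreconnected
    (convex_ball p r).isPreconnected (hne i) hy (Metric.mem_ball_self hr)⟩

theorem interior_closure_openCell {x : EuclideanSpace ℝ (Fin n)} (hx : ∀ i, A.val i x ≠ 0) :
    interior (closure (A.openCell (A.signAt x))) = A.openCell (A.signAt x) := by
  have hopen : IsOpen (A.openCell (A.signAt x)) :=
    A.isOpen_openCell fun i => sign_ne_zero.2 (hx i)
  have hne : (interior (A.openCell (A.signAt x))).Nonempty :=
    hopen.interior_eq.symm ▸ ⟨x, fun _ => rfl⟩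
  rw [(A.convex_openCell _).interior_closure_eq_interior_of_nonempty_interior hne,
    hopen.interior_eq]

theorem sign_val_of_mem_closure_openCell {σ : ι → SignType} {i : ι}
    {p : EuclideanSpace ℝ (Fin n)} (hp : p ∈ closure (A.openCell σ)) (hi : A.val i p ≠ 0) :
    SignType.sign (A.val i p) = σ i := by
  obtain ⟨r, hr, hball⟩ :=
    Metric.isOpen_iff.1 (isOpen_ne_fun (A.continuous_val i) continuous_const) p hi
  obtain ⟨q, hq, hpq⟩ := Metric.mem_closure_iff.1 hp r hr
  rw [← hq i]
  exact sign_val_eq_of_isPreconnected (convex_ball p r).isPreconnected hball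
    (Metric.mem_ball_self hr) (Metric.mem_ball'.2 hpq)

theorem sep_closure_openCell {x y : EuclideanSpace ℝ (Fin n)} (hx : ∀ i, A.val i x ≠ 0)
    (hy : ∀ i, A.val i y ≠ 0) :
    A.sep (closure (A.openCell (A.signAt x))) (closure (A.openCell (A.signAt y))) =
      {i | A.signAt x i ≠ A.signAt y i} := by
  ext i
  simp only [sep, A.interior_closure_openCell hx, A.interior_closure_openCell hy, mem_ofPred_eq]
  constructor
  · intro h
    exact (mul_neg_iff_sign_ne (hx i) (hy i)).1 (h x (fun _ => rfl) y (fun _ => rfl))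
  · intro h p hp q hq
    have hp0 : A.val i p ≠ 0 := sign_ne_zero.1 ((hp i).symm ▸ sign_ne_zero.2 (hx i))
    have hq0 : A.val i q ≠ 0 := sign_ne_zero.1 ((hq i).symm ▸ sign_ne_zero.2 (hy i))
    rwa [mul_neg_iff_sign_ne hp0 hq0, hp i, hq i]

variable {A}

theorem IsChamber.sep_eq_symmDiff {C D E : Set (EuclideanSpace ℝ (Fin n))} (hC : A.IsChamber C)
    (hD : A.IsChamber D) (hE : A.IsChamber E) : A.sep C E = A.sep C D ∆ A.sep D E := by
  obtain ⟨x, hx, rfl⟩ := hC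
  obtain ⟨y, hy, rfl⟩ := hD
  obtain ⟨z, hz, rfl⟩ := hE
  ext i
  rw [A.sep_closure_openCell hx hz, A.sep_closure_openCell hx hy, A.sep_closure_openCell hy hz]
  simp only [mem_symmDiff, mem_ofPred_eq]
  have hsx : A.signAt x i ≠ 0 := sign_ne_zero.2 (hx i)
  have hsy : A.signAt y i ≠ 0 := sign_ne_zero.2 (hy i)
  have hsz : A.signAt z i ≠ 0 := sign_ne_zero.2 (hz i)
  generalize A.signAt x i = s at *
  generalize A.signAt y i = t at *
  generalize A.signAt z i = u at *
  revert s t u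
  decide

theorem IsChamber.notMem_sep_of_mem_of_mem {D E : Set (EuclideanSpace ℝ (Fin n))}
    (hD : A.IsChamber D) (hE : A.IsChamber E) {i : ι} {p : EuclideanSpace ℝ (Fin n)}
    (hpD : p ∈ D) (hpE : p ∈ E) (hp : A.val i p ≠ 0) : i ∉ A.sep D E := by
  obtain ⟨x, hx, rfl⟩ := hD
  obtain ⟨y, hy, rfl⟩ := hE
  rw [A.sep_closure_openCell hx hy, mem_ofPred_eq, not_not,
    ← A.sign_val_of_mem_closure_openCell hpD hp, A.sign_val_of_mem_closure_openCell hpE hp]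

end Arrangement

theorem stmt8_general {n : ℕ} {ι : Type} (A : Arrangement n ι)
    (C : Set (EuclideanSpace ℝ (Fin n))) (hC : A.IsChamber C)
    (c c' : A.Cell) (hc : A.inS C c) (hle : A.cellLE c' c)
    (E E' : Set (EuclideanSpace ℝ (Fin n)))
    (hE : A.IsOpp c.C c.F E) (hE' : A.IsOpp c'.C c'.F E') :
    A.sep C E' ⊆ A.sep C E := by
  intro i hiE'
  by_cases hiF : i ∈ A.supp c.F
  · have hCD : i ∉ A.sep C c.C := fun hCD => hc.2.2.subset ⟨hCD, hiF⟩
    have hDE : i ∈ A.sep c.C E := hE.2.2 ▸ hiF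
    rw [hC.sep_eq_symmDiff c.isChamber hE.1, mem_symmDiff]
    exact Or.inr ⟨hDE, hCD⟩
  · obtain ⟨f, hfF, hf⟩ := not_subset.1 hiF
    have hD'E' : i ∉ A.sep c'.C E' := hE'.2.2 ▸ fun hiF' => hiF (hle.1.trans hiF')
    have hD'E : i ∉ A.sep c'.C E :=
      c'.isChamber.notMem_sep_of_mem_of_mem hE.1 (c'.faceLe (hle.1 hfF)) (hE.2.1 hfF) hf
    have hCD' : i ∈ A.sep C c'.C := by
      rw [hC.sep_eq_symmDiff c'.isChamber hE'.1, mem_symmDiff] at hiE'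
      tauto
    rw [hC.sep_eq_symmDiff c'.isChamber hE.1, mem_symmDiff]
    exact Or.inl ⟨hCD', hD'E⟩

/-- The map `η̃_C : S(C) → (C(A), ≤_C)`, `⟨D,F⟩ ↦ D^F`, is order-preserving. -/
theorem stmt8 {n : ℕ} {ι : Type} (A : Arrangement n ι)
    (C : Set (EuclideanSpace ℝ (Fin n))) (hC : A.IsChamber C)
    (c c' : A.Cell) (hc : A.inS C c) (hc' : A.inS C c') (hle : A.cellLE c' c)
    (E E' : Set (EuclideanSpace ℝ (Fin n)))
    (hE : A.IsOpp c.C c.F E) (hE' : A.IsOpp c'.C c'.F E') :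
    A.sep C E' ⊆ A.sep C E :=
  stmt8_general A C hC c c' hc hle E E' hE hE'
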